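/- arXiv:2410.13688 — 2 statements merged into one kernel-verified Lean document; each statement's English description precedes it below -/
import Mathlib

section
/- Let m ≥ 1, M ≥ 0, and let C₀,…,C_{M−1} ∈ ℝ^{m×m} be matrices with spectral norm ‖C_k‖ ≤ 1 for every k. Let à be the (M+1)m × (M+1)m block matrix with identity m×m diagonal blocks, with block (k+1,k) equal to −C_k for k = 0,…,M−1, and zeros elsewhere. Then à is invertible and its condition number κ = ‖Ã‖·‖Ã⁻¹‖ (spectral norms) satisfies κ ≤ 3(M+1). -/
/-- The spectral (l₂ operator) norm of a real matrix. -/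
noncomputable def specNorm {ι κ : Type*} [Fintype ι] [Fintype κ] [DecidableEq κ]
    (M : Matrix ι κ ℝ) : ℝ :=
  ‖LinearMap.toContinuousLinearMap (Matrix.toEuclideanLin M)‖

/-- The forward-Euler system matrix: block lower bidiagonal, of block size
`(M+1) × (M+1)` with `m × m` blocks, identity blocks on the diagonal and block
`(k+1, k)` equal to `−C_k`. -/
noncomputable def eulerBlockMatrix (m M : ℕ) (C : ℕ → Matrix (Fin m) (Fin m) ℝ) :
    Matrix (Fin (M + 1) × Fin m) (Fin (M + 1) × Fin m) ℝ :=
  Matrix.of fun p q =>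
    if (p.1 : ℕ) = (q.1 : ℕ) then (if p.2 = q.2 then 1 else 0)
    else if (p.1 : ℕ) = (q.1 : ℕ) + 1 then -(C (q.1 : ℕ) p.2 q.2)
    else 0

/-!
Writing `Ã = 1 - N`, the block shift `N` (blocks `C_k` on the block subdiagonal) moves mass
from block `k` to block `k + 1` through a contraction, so `‖N‖ ≤ 1`, and it is nilpotent with
`N ^ (M + 1) = 0`. Hence `Ã⁻¹ = ∑_{i ≤ M} N ^ i`, giving `‖Ã‖ ≤ 2` and `‖Ã⁻¹‖ ≤ M + 1`.
-/

open Finset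
open scoped Matrix Matrix.Norms.L2Operator

theorem norm_one_sub_mul_norm_geom_sum_le {R : Type*} [NormedRing R] [NormOneClass R] {x : R}
    (hx : ‖x‖ ≤ 1) (n : ℕ) : ‖1 - x‖ * ‖∑ i ∈ range n, x ^ i‖ ≤ 2 * n := by
  have h_sub : ‖1 - x‖ ≤ 2 := by linarith [norm_sub_le (1 : R) x, norm_one (α := R)]
  have h_geom : ‖∑ i ∈ range n, x ^ i‖ ≤ n :=
    calc ‖∑ i ∈ range n, x ^ i‖ ≤ ∑ i ∈ range n, ‖x ^ i‖ := norm_sum_le _ _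
      _ ≤ ∑ _i ∈ range n, (1 : ℝ) :=
        sum_le_sum fun i _ => (norm_pow_le x i).trans (pow_le_one₀ (norm_nonneg x) hx)
      _ = n := by simp
  exact mul_le_mul h_sub h_geom (norm_nonneg _) zero_le_two

namespace Matrix

variable {ι R : Type*} [Fintype ι] [DecidableEq ι] [Semiring R]

theorem pow_apply_eq_zero_of_lt_add {A : Matrix ι ι R} {f : ι → ℕ}
    (hA : ∀ p q, f p ≤ f q → A p q = 0) (j : ℕ) {p q : ι} (hpq : f p < f q + j) :
    (A ^ j) p q = 0 := by
  induction j generalizing p with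
  | zero => exact one_apply_ne fun h => by subst h; omega
  | succ j ih =>
    rw [pow_succ', mul_apply]
    refine sum_eq_zero fun r _ => ?_
    by_cases hr : f p ≤ f r
    · rw [hA p r hr, zero_mul]
    · rw [ih (by omega), mul_zero]

theorem pow_eq_zero_of_forall_lt {A : Matrix ι ι R} {f : ι → ℕ} {n : ℕ}
    (hA : ∀ p q, f p ≤ f q → A p q = 0) (hf : ∀ p, f p < n) : A ^ n = 0 := by
  ext p q
  exact pow_apply_eq_zero_of_lt_add hA n (by have := hf p; omega)

end Matrix

theorem specNorm_eq_l2_opNorm {ι κ : Type*} [Fintype ι] [Fintype κ] [DecidableEq κ]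
    (A : Matrix ι κ ℝ) : specNorm A = ‖A‖ :=
  rfl

theorem sum_sq_mulVec_le_of_norm_le_one {ι κ : Type*} [Fintype ι] [Fintype κ] [DecidableEq κ]
    {A : Matrix ι κ ℝ} (hA : ‖A‖ ≤ 1) (v : κ → ℝ) :
    ∑ i, (A *ᵥ v) i ^ 2 ≤ ∑ j, v j ^ 2 := by
  have h := (A.l2_opNorm_mulVec (WithLp.toLp 2 v)).trans
    (mul_le_of_le_one_left (norm_nonneg _) hA)
  simpa [EuclideanSpace.real_norm_sq_eq] using pow_le_pow_left₀ (norm_nonneg _) h 2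

section EulerShift

variable {m M : ℕ} {C : ℕ → Matrix (Fin m) (Fin m) ℝ}

noncomputable def eulerShift (m M : ℕ) (C : ℕ → Matrix (Fin m) (Fin m) ℝ) :
    Matrix (Fin (M + 1) × Fin m) (Fin (M + 1) × Fin m) ℝ :=
  Matrix.of fun p q => if (p.1 : ℕ) = (q.1 : ℕ) + 1 then C (q.1 : ℕ) p.2 q.2 else 0

theorem eulerBlockMatrix_eq_one_sub_eulerShift :
    eulerBlockMatrix m M C = 1 - eulerShift m M C := by
  ext ⟨i, s⟩ ⟨j, t⟩
  simp only [eulerBlockMatrix, eulerShift, Matrix.of_apply, Matrix.sub_apply, Matrix.one_apply,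
    Prod.mk.injEq, Fin.val_inj]
  by_cases hij : i = j
  · subst hij
    simp
  · by_cases hsucc : (i : ℕ) = j + 1 <;> simp [hij, hsucc]

theorem eulerShift_pow_eq_zero : eulerShift m M C ^ (M + 1) = 0 :=
  Matrix.pow_eq_zero_of_forall_lt (f := fun p => (p.1 : ℕ))
    (fun p q h => if_neg (by omega)) fun p => p.1.isLt

theorem eulerShift_mulVec_apply_zero (x : Fin (M + 1) × Fin m → ℝ) (s : Fin m) :
    (eulerShift m M C *ᵥ x) (0, s) = 0 :=
  sum_eq_zero fun q _ => by simp [eulerShift]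

theorem eulerShift_mulVec_apply_succ (x : Fin (M + 1) × Fin m → ℝ) (i : Fin M) (s : Fin m) :
    (eulerShift m M C *ᵥ x) (i.succ, s) = (C i *ᵥ fun t => x (i.castSucc, t)) s := by
  rw [Matrix.mulVec, dotProduct, Fintype.sum_prod_type, sum_eq_single i.castSucc]
  · simp [eulerShift, Matrix.mulVec, dotProduct]
  · intro j _ hj
    refine sum_eq_zero fun t _ => ?_
    have hne : (i : ℕ) ≠ j := fun h => hj (Fin.ext (by rw [Fin.val_castSucc, h]))
    simp [eulerShift, hne]
  · simp

theorem sum_sq_eulerShift_mulVec_le (hC : ∀ k < M, ‖C k‖ ≤ 1) (x : Fin (M + 1) × Fin m → ℝ) :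
    ∑ p, (eulerShift m M C *ᵥ x) p ^ 2 ≤ ∑ p, x p ^ 2 := by
  have h_block (i : Fin M) :
      ∑ s, (eulerShift m M C *ᵥ x) (i.succ, s) ^ 2 ≤ ∑ t, x (i.castSucc, t) ^ 2 := by
    simp only [eulerShift_mulVec_apply_succ]
    exact sum_sq_mulVec_le_of_norm_le_one (hC i i.isLt) _
  have h_last : 0 ≤ ∑ t, x (Fin.last M, t) ^ 2 := by positivity
  rw [Fintype.sum_prod_type, Fintype.sum_prod_type, Fin.sum_univ_succ, Fin.sum_univ_castSucc]
  simp only [eulerShift_mulVec_apply_zero, zero_pow two_ne_zero, sum_const_zero, zero_add]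
  linarith [sum_le_sum fun i (_ : i ∈ univ) => h_block i]

theorem norm_eulerShift_le_one (hC : ∀ k < M, ‖C k‖ ≤ 1) : ‖eulerShift m M C‖ ≤ 1 := by
  rw [Matrix.cstar_norm_def]
  refine ContinuousLinearMap.opNorm_le_bound _ zero_le_one fun x => ?_
  rw [one_mul, ← sq_le_sq₀ (norm_nonneg _) (norm_nonneg _), EuclideanSpace.real_norm_sq_eq,
    EuclideanSpace.real_norm_sq_eq]
  exact sum_sq_eulerShift_mulVec_le hC x

end EulerShift

/-- **Lemma 3 (condition number bound).**  If `‖C_k‖ ≤ 1` (spectral norm) for all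
`k < M`, then the forward-Euler block matrix `Ã` is invertible and its condition
number `κ = ‖Ã‖·‖Ã⁻¹‖` satisfies `κ ≤ 3(M+1)`. -/
theorem eulerBlockMatrix_condition_number (m M : ℕ) (hm : 1 ≤ m)
    (C : ℕ → Matrix (Fin m) (Fin m) ℝ) (hC : ∀ k < M, specNorm (C k) ≤ 1) :
    IsUnit (eulerBlockMatrix m M C) ∧
      specNorm (eulerBlockMatrix m M C) * specNorm (eulerBlockMatrix m M C)⁻¹ ≤
        3 * (M + 1) := by
  -- makes the matrix ring nontrivial, hence `‖1‖ = 1`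
  have : Nonempty (Fin m) := ⟨⟨0, hm⟩⟩
  have h_nil : eulerShift m M C ^ (M + 1) = 0 := eulerShift_pow_eq_zero
  have h_inv : (1 - eulerShift m M C)⁻¹ = ∑ i ∈ range (M + 1), eulerShift m M C ^ i :=
    Matrix.inv_eq_right_inv (by rw [mul_neg_geom_sum, h_nil, sub_zero])
  rw [specNorm_eq_l2_opNorm, specNorm_eq_l2_opNorm, eulerBlockMatrix_eq_one_sub_eulerShift, h_inv]
  refine ⟨IsNilpotent.isUnit_one_sub ⟨M + 1, h_nil⟩, ?_⟩
  calc _ ≤ 2 * ((M + 1 : ℕ) : ℝ) :=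
        norm_one_sub_mul_norm_geom_sum_le (norm_eulerShift_le_one hC) (M + 1)
    _ ≤ 3 * (M + 1) := by push_cast; linarith [(M.cast_nonneg : (0 : ℝ) ≤ M)]
end

section
/- Let u : [0,T] → ℝⁿ solve the quadratic ODE under the stated assumptions. For every ε > 0 there exists M ∈ ℕ with step size h = T/M such that the forward-Euler iterates û^{k+1} = û^k + h(F₀(kh) + F₁û^k + F₂(û^k ⊗ û^k)), û⁰ = u₀, satisfy ‖ u_c/‖u_c‖ − ũ/‖ũ‖ ‖ ≤ ε, where u_c = (u(0)ᵀ, u(h)ᵀ, …, u(Mh)ᵀ)ᵀ and ũ = ((û⁰)ᵀ, (û¹)ᵀ, …, (û^M)ᵀ)ᵀ (both nonzero). -/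
/-- Application of a matrix to a Euclidean vector. -/
noncomputable def mApp {ι κ : Type*} [Fintype ι] [Fintype κ] [DecidableEq κ]
    (M : Matrix ι κ ℝ) (v : EuclideanSpace ℝ κ) : EuclideanSpace ℝ ι :=
  Matrix.toEuclideanLin M v

/-- The Kronecker product of two Euclidean vectors: `(x ⊗ y)_{(i,k)} = x_i y_k`. -/
noncomputable def kron {ι κ : Type*} [Fintype ι] [Fintype κ]
    (x : EuclideanSpace ℝ ι) (y : EuclideanSpace ℝ κ) : EuclideanSpace ℝ (ι × κ) :=
  (WithLp.equiv 2 _).symm fun p => x p.1 * y p.2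

open Set Filter Topology

section Stack

variable {E : Type*} [NormedAddCommGroup E]

theorem norm_inv_norm_smul_sub_inv_norm_smul_le [NormedSpace ℝ E] {x y : E} (hx : x ≠ 0)
    (hy : y ≠ 0) :
    ‖‖x‖⁻¹ • x - ‖y‖⁻¹ • y‖ ≤ 2 * ‖x - y‖ / ‖x‖ := by
  have hx0 : 0 < ‖x‖ := norm_pos_iff.2 hx
  have hy0 : 0 < ‖y‖ := norm_pos_iff.2 hy
  have hsplit : ‖x‖⁻¹ • x - ‖y‖⁻¹ • y = ‖x‖⁻¹ • (x - y) + (‖x‖⁻¹ - ‖y‖⁻¹) • y := by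
    rw [smul_sub, sub_smul]; abel
  have hfirst : ‖‖x‖⁻¹ • (x - y)‖ = ‖x - y‖ / ‖x‖ := by
    rw [norm_smul, norm_inv, norm_norm, inv_mul_eq_div]
  have hsecond : ‖(‖x‖⁻¹ - ‖y‖⁻¹) • y‖ ≤ ‖x - y‖ / ‖x‖ := by
    have hnorms : (‖x‖⁻¹ - ‖y‖⁻¹) * ‖y‖ = (‖y‖ - ‖x‖) / ‖x‖ := by field_simp
    rw [norm_smul, Real.norm_eq_abs, ← abs_of_pos hy0, ← abs_mul, abs_of_pos hy0, hnorms,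
      abs_div, abs_of_pos hx0]
    gcongr
    rw [norm_sub_rev]
    exact abs_norm_sub_norm_le y x
  calc ‖‖x‖⁻¹ • x - ‖y‖⁻¹ • y‖ ≤ ‖‖x‖⁻¹ • (x - y)‖ + ‖(‖x‖⁻¹ - ‖y‖⁻¹) • y‖ :=
        hsplit ▸ norm_add_le _ _
    _ ≤ 2 * ‖x - y‖ / ‖x‖ := by rw [hfirst, mul_div_assoc]; linarith

noncomputable def stack (N : ℕ) (x : ℕ → E) : PiLp 2 (fun _ : Fin N => E) :=
  WithLp.toLp 2 fun k => x k

theorem norm_stack (N : ℕ) (x : ℕ → E) :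
    ‖stack N x‖ = √(∑ k ∈ Finset.range N, ‖x k‖ ^ 2) := by
  rw [PiLp.norm_eq_of_L2, ← Fin.sum_univ_eq_sum_range (fun k => ‖x k‖ ^ 2)]
  rfl

theorem norm_le_norm_stack {N k : ℕ} (hk : k < N) (x : ℕ → E) : ‖x k‖ ≤ ‖stack N x‖ := by
  rw [norm_stack]
  exact Real.le_sqrt_of_sq_le
    (Finset.single_le_sum (fun i _ => sq_nonneg ‖x i‖) (Finset.mem_range.2 hk))

theorem norm_stack_le {N : ℕ} {x : ℕ → E} {δ : ℝ} (hδ : 0 ≤ δ) (hx : ∀ k < N, ‖x k‖ ≤ δ) :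
    ‖stack N x‖ ≤ √N * δ := by
  rw [norm_stack, ← Real.sqrt_sq hδ, ← Real.sqrt_mul (Nat.cast_nonneg N)]
  gcongr
  calc ∑ k ∈ Finset.range N, ‖x k‖ ^ 2 ≤ ∑ _k ∈ Finset.range N, δ ^ 2 :=
        Finset.sum_le_sum fun k hk => pow_le_pow_left₀ (norm_nonneg _)
          (hx k (Finset.mem_range.1 hk)) 2
    _ = N * δ ^ 2 := by simp

theorem sqrt_sum_normalized_sub_le [NormedSpace ℝ E] {N : ℕ} {x y : ℕ → E} {v : E} {δ : ℝ}
    (hv : v ≠ 0) (hx0 : x 0 = v) (hy0 : y 0 = v) (hδ : 0 ≤ δ) (hxy : ∀ k ≤ N, ‖x k - y k‖ ≤ δ) :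
    √(∑ k ∈ Finset.range (N + 1), ‖x k‖ ^ 2) ≠ 0 ∧
      √(∑ k ∈ Finset.range (N + 1), ‖y k‖ ^ 2) ≠ 0 ∧
      √(∑ k ∈ Finset.range (N + 1),
        ‖(√(∑ j ∈ Finset.range (N + 1), ‖x j‖ ^ 2))⁻¹ • x k -
          (√(∑ j ∈ Finset.range (N + 1), ‖y j‖ ^ 2))⁻¹ • y k‖ ^ 2) ≤
        2 * (√(N + 1) * δ) / ‖v‖ := by
  set X := stack (N + 1) x
  set Y := stack (N + 1) y
  have hv0 : 0 < ‖v‖ := norm_pos_iff.2 hv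
  have hX : ‖v‖ ≤ ‖X‖ := hx0 ▸ norm_le_norm_stack N.succ_pos x
  have hY : ‖v‖ ≤ ‖Y‖ := hy0 ▸ norm_le_norm_stack N.succ_pos y
  have hXY : ‖X - Y‖ ≤ √(N + 1) * δ := by
    have h := norm_stack_le (N := N + 1) (x := x - y) hδ fun k hk => hxy k (by omega)
    rwa [Nat.cast_succ] at h
  simp only [← norm_stack]
  refine ⟨(hv0.trans_le hX).ne', (hv0.trans_le hY).ne', ?_⟩
  calc ‖‖X‖⁻¹ • X - ‖Y‖⁻¹ • Y‖
      ≤ 2 * ‖X - Y‖ / ‖X‖ :=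
        norm_inv_norm_smul_sub_inv_norm_smul_le (norm_pos_iff.1 (hv0.trans_le hX))
          (norm_pos_iff.1 (hv0.trans_le hY))
    _ ≤ 2 * (√(N + 1) * δ) / ‖v‖ := by gcongr

end Stack

theorem le_mul_mul_pow_of_le_mul_add {e : ℕ → ℝ} {a b : ℝ} {N : ℕ} (ha : 1 ≤ a) (hb : 0 ≤ b)
    (h0 : e 0 ≤ 0) (hstep : ∀ k < N, e k ≤ k * b * a ^ k → e (k + 1) ≤ a * e k + b) :
    ∀ k ≤ N, e k ≤ k * b * a ^ k := by
  intro k hk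
  induction k with
  | zero => simpa using h0
  | succ k ih =>
    have hk' := ih (by omega)
    have hak : 1 ≤ a ^ (k + 1) := one_le_pow₀ ha
    calc e (k + 1) ≤ a * e k + b := hstep k (by omega) hk'
      _ ≤ a * (k * b * a ^ k) + b * a ^ (k + 1) :=
          add_le_add (mul_le_mul_of_nonneg_left hk' (by linarith)) (le_mul_of_one_le_right hb hak)
      _ = (k + 1 : ℕ) * b * a ^ (k + 1) := by push_cast; ring

section Euler

variable {E : Type*} [NormedAddCommGroup E] [NormedSpace ℝ E]

theorem norm_sub_sub_smul_le_of_hasDerivWithinAt {u g : ℝ → E} {a b C : ℝ} (hab : a ≤ b)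
    (hC : 0 ≤ C) (hu : ∀ s ∈ Icc a b, HasDerivWithinAt u (g s) (Icc a b) s)
    (hg : ∀ s ∈ Icc a b, ‖g s - g a‖ ≤ C * (s - a)) :
    ‖u b - u a - (b - a) • g a‖ ≤ C * (b - a) ^ 2 := by
  have hφ : ∀ s ∈ Icc a b,
      HasDerivWithinAt (fun r => u r - r • g a) (g s - g a) (Icc a b) s := fun s hs => by
    have hlin := (hasDerivWithinAt_id s (Icc a b)).smul_const (g a)
    simp only [id, one_smul] at hlin
    exact (hu s hs).sub hlin
  have h := norm_image_sub_le_of_norm_deriv_le_segment' (C := C * (b - a)) hφ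
    (fun s hs => (hg s (Ico_subset_Icc_self hs)).trans (by gcongr; exact hs.2.le)) b
    (right_mem_Icc.2 hab)
  calc ‖u b - u a - (b - a) • g a‖ = ‖u b - b • g a - (u a - a • g a)‖ := by
        rw [sub_smul]; congr 1; abel
    _ ≤ C * (b - a) ^ 2 := by linarith

variable {f : ℝ → E → E} {u : ℝ → E} {T h C L r : ℝ}

theorem norm_sub_euler_step_le (hh : 0 < h) (hC : 0 ≤ C) {t : ℝ} (ht : 0 ≤ t) (htT : t + h ≤ T)
    (hu : ∀ s ∈ Icc 0 T, HasDerivWithinAt u (f s (u s)) (Icc 0 T) s)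
    (hg : ∀ s ∈ Icc 0 T, ∀ s' ∈ Icc 0 T, ‖f s (u s) - f s' (u s')‖ ≤ C * ‖s - s'‖)
    (hf : ∀ s ∈ Icc 0 T, ∀ x, ‖x - u s‖ ≤ r → ‖f s x - f s (u s)‖ ≤ L * ‖x - u s‖)
    {x : E} (hx : ‖x - u t‖ ≤ r) :
    ‖u (t + h) - (x + h • f t x)‖ ≤ (1 + h * L) * ‖u t - x‖ + C * h ^ 2 := by
  have hsub : Icc t (t + h) ⊆ Icc 0 T := Icc_subset_Icc ht htT
  have htrunc : ‖u (t + h) - u t - h • f t (u t)‖ ≤ C * h ^ 2 := by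
    have h' := norm_sub_sub_smul_le_of_hasDerivWithinAt (u := u) (g := fun s => f s (u s))
      (by linarith) hC (fun s hs => (hu s (hsub hs)).mono hsub)
      (fun s hs => by
        simpa [Real.norm_of_nonneg (sub_nonneg.2 hs.1)] using
          hg s (hsub hs) t (hsub (left_mem_Icc.2 (by linarith))))
    simpa using h'
  have hlip : ‖h • (f t (u t) - f t x)‖ ≤ h * L * ‖u t - x‖ := by
    rw [norm_smul, Real.norm_of_nonneg hh.le, norm_sub_rev, mul_assoc, norm_sub_rev (u t)]
    gcongr
    exact hf t (hsub (left_mem_Icc.2 (by linarith))) x hx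
  calc ‖u (t + h) - (x + h • f t x)‖
      = ‖(u (t + h) - u t - h • f t (u t)) + (u t - x) + h • (f t (u t) - f t x)‖ := by
        congr 1; rw [smul_sub]; abel
    _ ≤ C * h ^ 2 + ‖u t - x‖ + h * L * ‖u t - x‖ := norm_add₃_le.trans (by gcongr)
    _ = (1 + h * L) * ‖u t - x‖ + C * h ^ 2 := by ring

theorem norm_sub_euler_le {y : ℕ → E} {N : ℕ} (hh : 0 < h) (hC : 0 ≤ C) (hL : 0 ≤ L)
    (hNh : N * h ≤ T)
    (hu : ∀ s ∈ Icc 0 T, HasDerivWithinAt u (f s (u s)) (Icc 0 T) s)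
    (hg : ∀ s ∈ Icc 0 T, ∀ s' ∈ Icc 0 T, ‖f s (u s) - f s' (u s')‖ ≤ C * ‖s - s'‖)
    (hf : ∀ s ∈ Icc 0 T, ∀ x, ‖x - u s‖ ≤ r → ‖f s x - f s (u s)‖ ≤ L * ‖x - u s‖)
    (hr : C * T * Real.exp (L * T) * h ≤ r)
    (hy0 : y 0 = u 0) (hy : ∀ k : ℕ, y (k + 1) = y k + h • f (k * h) (y k)) :
    ∀ k ≤ N, ‖u (k * h) - y k‖ ≤ C * T * Real.exp (L * T) * h := by
  have hgrowth : ∀ k ≤ N, k * (C * h ^ 2) * (1 + h * L) ^ k ≤ C * T * Real.exp (L * T) * h := by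
    intro k hk
    have hkh : k * h ≤ T := le_trans (by gcongr) hNh
    have hpow : (1 + h * L) ^ k ≤ Real.exp (L * T) := calc
      (1 + h * L) ^ k ≤ Real.exp (h * L) ^ k := by
        gcongr
        linarith [Real.add_one_le_exp (h * L)]
      _ = Real.exp (L * (k * h)) := by rw [← Real.exp_nat_mul]; ring_nf
      _ ≤ Real.exp (L * T) := by gcongr
    calc k * (C * h ^ 2) * (1 + h * L) ^ k = C * (k * h) * (1 + h * L) ^ k * h := by ring
      _ ≤ C * T * Real.exp (L * T) * h := by
        have hT : 0 ≤ T := le_trans (by positivity) hkh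
        gcongr
  have herr := le_mul_mul_pow_of_le_mul_add (e := fun k => ‖u (k * h) - y k‖)
    (a := 1 + h * L) (b := C * h ^ 2) (N := N)
    (le_add_of_nonneg_right (by positivity)) (by positivity) (by simp [hy0]) fun k hk hek => by
      have hrk : ‖y k - u (k * h)‖ ≤ r := by
        rw [norm_sub_rev]; exact hek.trans ((hgrowth k hk.le).trans hr)
      have hkT : (k + 1 : ℝ) * h ≤ T := le_trans (by gcongr; exact_mod_cast hk) hNh
      have h' := norm_sub_euler_step_le hh hC (by positivity) (by linarith) hu hg hf hrk
      simpa [hy, add_mul] using h'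
  exact fun k hk => (herr k hk).trans (hgrowth k hk)

end Euler

section Quadratic

variable {ι κ : Type*} [Fintype ι] [Fintype κ]

theorem norm_kron (x : EuclideanSpace ℝ ι) (y : EuclideanSpace ℝ κ) :
    ‖kron x y‖ = ‖x‖ * ‖y‖ := by
  rw [EuclideanSpace.norm_eq, EuclideanSpace.norm_eq, EuclideanSpace.norm_eq,
    ← Real.sqrt_mul (by positivity), Finset.sum_mul_sum, ← Fintype.sum_prod_type']
  simp [kron, mul_pow]

theorem kron_self_sub_kron_self (x y : EuclideanSpace ℝ ι) :
    kron x x - kron y y = kron x (x - y) + kron (x - y) y := by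
  ext p
  simp only [kron, PiLp.sub_apply, PiLp.add_apply, WithLp.equiv_symm_apply]
  ring

theorem specNorm_nonneg [DecidableEq κ] (A : Matrix ι κ ℝ) : 0 ≤ specNorm A := norm_nonneg _

theorem norm_mApp_le [DecidableEq κ] (A : Matrix ι κ ℝ) (v : EuclideanSpace ℝ κ) :
    ‖mApp A v‖ ≤ specNorm A * ‖v‖ :=
  (LinearMap.toContinuousLinearMap (Matrix.toEuclideanLin A)).le_opNorm v

variable [DecidableEq ι]

noncomputable def quadraticField (F₀ : ℝ → EuclideanSpace ℝ ι) (F1 : Matrix ι ι ℝ)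
    (F2 : Matrix ι (ι × ι) ℝ) (t : ℝ) (x : EuclideanSpace ℝ ι) : EuclideanSpace ℝ ι :=
  F₀ t + mApp F1 x + mApp F2 (kron x x)

variable (F₀ : ℝ → EuclideanSpace ℝ ι) (F1 : Matrix ι ι ℝ) (F2 : Matrix ι (ι × ι) ℝ)

theorem norm_quadraticField_le (t : ℝ) (x : EuclideanSpace ℝ ι) :
    ‖quadraticField F₀ F1 F2 t x‖ ≤ ‖F₀ t‖ + (specNorm F1 + specNorm F2 * ‖x‖) * ‖x‖ := by
  have h2 := norm_mApp_le F2 (kron x x)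
  rw [norm_kron] at h2
  calc ‖quadraticField F₀ F1 F2 t x‖ ≤ ‖F₀ t‖ + ‖mApp F1 x‖ + ‖mApp F2 (kron x x)‖ :=
        norm_add₃_le
    _ ≤ ‖F₀ t‖ + specNorm F1 * ‖x‖ + specNorm F2 * (‖x‖ * ‖x‖) := by
        gcongr
        exact norm_mApp_le F1 x
    _ = ‖F₀ t‖ + (specNorm F1 + specNorm F2 * ‖x‖) * ‖x‖ := by ring

theorem norm_quadraticField_sub_le (s t : ℝ) (x y : EuclideanSpace ℝ ι) :
    ‖quadraticField F₀ F1 F2 s x - quadraticField F₀ F1 F2 t y‖ ≤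
      ‖F₀ s - F₀ t‖ + (specNorm F1 + specNorm F2 * (‖x‖ + ‖y‖)) * ‖x - y‖ := by
  have hsplit : quadraticField F₀ F1 F2 s x - quadraticField F₀ F1 F2 t y =
      (F₀ s - F₀ t) + mApp F1 (x - y) + mApp F2 (kron x (x - y) + kron (x - y) y) := by
    simp only [quadraticField, mApp, map_sub, ← kron_self_sub_kron_self]
    abel
  have h2 := norm_mApp_le F2 (kron x (x - y) + kron (x - y) y)
  have h2' : ‖kron x (x - y) + kron (x - y) y‖ ≤ (‖x‖ + ‖y‖) * ‖x - y‖ := by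
    refine (norm_add_le _ _).trans_eq ?_
    rw [norm_kron, norm_kron]
    ring
  rw [hsplit]
  calc _ ≤ ‖F₀ s - F₀ t‖ + ‖mApp F1 (x - y)‖ + ‖mApp F2 (kron x (x - y) + kron (x - y) y)‖ :=
        norm_add₃_le
    _ ≤ ‖F₀ s - F₀ t‖ + specNorm F1 * ‖x - y‖ + specNorm F2 * ((‖x‖ + ‖y‖) * ‖x - y‖) := by
        gcongr
        · exact norm_mApp_le F1 _
        · exact h2.trans (mul_le_mul_of_nonneg_left h2' (specNorm_nonneg F2))
    _ = _ := by ring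

theorem norm_quadraticField_sub_le_of_norm_sub_le_one {B : ℝ} (t : ℝ)
    {x y : EuclideanSpace ℝ ι} (hy : ‖y‖ ≤ B) (hxy : ‖x - y‖ ≤ 1) :
    ‖quadraticField F₀ F1 F2 t x - quadraticField F₀ F1 F2 t y‖ ≤
      (specNorm F1 + specNorm F2 * (B + 1 + B)) * ‖x - y‖ := by
  have hx : ‖x‖ ≤ B + 1 := by linarith [norm_sub_norm_le x y]
  have hF2 := specNorm_nonneg F2
  calc _ ≤ ‖F₀ t - F₀ t‖ + (specNorm F1 + specNorm F2 * (‖x‖ + ‖y‖)) * ‖x - y‖ :=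
        norm_quadraticField_sub_le F₀ F1 F2 t t x y
    _ ≤ _ := by rw [sub_self, norm_zero, zero_add]; gcongr

theorem exists_lipschitz_quadraticField_comp {T B K K' : ℝ} (hT : 0 < T)
    {F₀' u : ℝ → EuclideanSpace ℝ ι} (hF₀ : ∀ t, HasDerivAt F₀ (F₀' t) t)
    (hF₀_le : ∀ t ∈ Icc 0 T, ‖F₀ t‖ ≤ K) (hF₀'_le : ∀ t ∈ Icc 0 T, ‖F₀' t‖ ≤ K')
    (hu : ∀ t ∈ Icc 0 T, HasDerivAt u (quadraticField F₀ F1 F2 t (u t)) t)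
    (hB : ∀ t ∈ Icc 0 T, ‖u t‖ ≤ B) :
    ∃ C, 0 ≤ C ∧ ∀ s ∈ Icc 0 T, ∀ t ∈ Icc 0 T,
      ‖quadraticField F₀ F1 F2 s (u s) - quadraticField F₀ F1 F2 t (u t)‖ ≤ C * ‖s - t‖ := by
  have h0 : (0 : ℝ) ∈ Icc 0 T := left_mem_Icc.2 hT.le
  have hB0 : 0 ≤ B := (norm_nonneg _).trans (hB 0 h0)
  have hK' : 0 ≤ K' := (norm_nonneg _).trans (hF₀'_le 0 h0)
  have hF1 := specNorm_nonneg F1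
  have hF2 := specNorm_nonneg F2
  obtain ⟨G, hG⟩ : ∃ G, ∀ t ∈ Icc 0 T, ‖quadraticField F₀ F1 F2 t (u t)‖ ≤ G :=
    ⟨K + (specNorm F1 + specNorm F2 * B) * B, fun t ht =>
      (norm_quadraticField_le F₀ F1 F2 t (u t)).trans (by gcongr <;> bound [hF₀_le t ht, hB t ht])⟩
  have hG0 : 0 ≤ G := (norm_nonneg _).trans (hG 0 h0)
  have hu_lip : ∀ s ∈ Icc 0 T, ∀ t ∈ Icc 0 T, ‖u s - u t‖ ≤ G * ‖s - t‖ := fun s hs t ht =>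
    (convex_Icc 0 T).norm_image_sub_le_of_norm_hasDerivWithin_le
      (fun r hr => (hu r hr).hasDerivWithinAt) hG ht hs
  have hF₀_lip : ∀ s ∈ Icc 0 T, ∀ t ∈ Icc 0 T, ‖F₀ s - F₀ t‖ ≤ K' * ‖s - t‖ := fun s hs t ht =>
    (convex_Icc 0 T).norm_image_sub_le_of_norm_hasDerivWithin_le
      (fun r _ => (hF₀ r).hasDerivWithinAt) hF₀'_le ht hs
  refine ⟨K' + (specNorm F1 + specNorm F2 * (B + B)) * G, by positivity, fun s hs t ht => ?_⟩
  calc _ ≤ ‖F₀ s - F₀ t‖ + (specNorm F1 + specNorm F2 * (‖u s‖ + ‖u t‖)) * ‖u s - u t‖ :=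
        norm_quadraticField_sub_le F₀ F1 F2 s t (u s) (u t)
    _ ≤ K' * ‖s - t‖ + (specNorm F1 + specNorm F2 * (B + B)) * (G * ‖s - t‖) := by
        gcongr <;> bound [hF₀_lip s hs t ht, hu_lip s hs t ht, hB s hs, hB t ht]
    _ = _ := by ring

theorem exists_euler_error_le_div {T K K' : ℝ} (hT : 0 < T) {F₀' u : ℝ → EuclideanSpace ℝ ι}
    (hF₀ : ∀ t, HasDerivAt F₀ (F₀' t) t) (hF₀_le : ∀ t ∈ Icc 0 T, ‖F₀ t‖ ≤ K)
    (hF₀'_le : ∀ t ∈ Icc 0 T, ‖F₀' t‖ ≤ K')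
    (hu : ∀ t ∈ Icc 0 T, HasDerivAt u (quadraticField F₀ F1 F2 t (u t)) t) :
    ∃ A : ℝ, 0 ≤ A ∧ ∀ M : ℕ, 0 < M → A / M ≤ 1 → ∀ uE : ℕ → EuclideanSpace ℝ ι, uE 0 = u 0 →
      (∀ k : ℕ, uE (k + 1) = uE k + (T / M) • quadraticField F₀ F1 F2 (k * (T / M)) (uE k)) →
      ∀ k ≤ M, ‖u (k * (T / M)) - uE k‖ ≤ A / M := by
  obtain ⟨B, hB⟩ := isCompact_Icc.exists_bound_of_continuousOn
    fun t ht => (hu t ht).continuousAt.continuousWithinAt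
  have hB0 : 0 ≤ B := (norm_nonneg _).trans (hB 0 (left_mem_Icc.2 hT.le))
  obtain ⟨C, hC, hg_lip⟩ :=
    exists_lipschitz_quadraticField_comp F₀ F1 F2 hT hF₀ hF₀_le hF₀'_le hu hB
  set L := specNorm F1 + specNorm F2 * (B + 1 + B)
  have hL : 0 ≤ L := by
    have := specNorm_nonneg F1
    have := specNorm_nonneg F2
    positivity
  refine ⟨C * T * Real.exp (L * T) * T, by positivity, fun M hM hAM uE huE0 huE k hk => ?_⟩
  rw [mul_div_assoc] at hAM ⊢
  exact norm_sub_euler_le (N := M) (r := 1) (by positivity) hC hL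
    (mul_div_cancel₀ T (by positivity)).le (fun t ht => (hu t ht).hasDerivWithinAt) hg_lip
    (fun t ht x hx => norm_quadraticField_sub_le_of_norm_sub_le_one F₀ F1 F2 t (hB t ht) hx)
    hAM huE0 huE k hk

end Quadratic

theorem tendsto_sqrt_add_one_div_atTop :
    Tendsto (fun M : ℕ => √((M : ℝ) + 1) / M) atTop (𝓝 0) := by
  have h := tendsto_inv_atTop_nhds_zero_nat (𝕜 := ℝ)
  have hsq : Tendsto (fun M : ℕ => √((M : ℝ)⁻¹ + ((M : ℝ)⁻¹) ^ 2)) atTop (𝓝 0) := by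
    simpa using (h.add (h.pow 2)).sqrt
  refine hsq.congr' ((eventually_gt_atTop 0).mono fun M hM => ?_)
  have hM' : (0 : ℝ) < M := by exact_mod_cast hM
  calc √((M : ℝ)⁻¹ + ((M : ℝ)⁻¹) ^ 2) = √(((M : ℝ) + 1) / M ^ 2) := by
        congr 1; field_simp
    _ = √((M : ℝ) + 1) / M := by rw [Real.sqrt_div' _ (sq_nonneg _), Real.sqrt_sq hM'.le]

theorem classical_euler_normalized_solution_general (n : ℕ) (T : ℝ) (hT : 0 < T)
    (F₀ : ℝ → EuclideanSpace ℝ (Fin n)) (F₀' : ℝ → EuclideanSpace ℝ (Fin n))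
    (F1 : Matrix (Fin n) (Fin n) ℝ) (F2 : Matrix (Fin n) (Fin n × Fin n) ℝ)
    (u₀ : EuclideanSpace ℝ (Fin n)) (u : ℝ → EuclideanSpace ℝ (Fin n))
    (nF0 sF0' : ℝ)
    -- assumptions on the data
    (hF₀deriv : ∀ t : ℝ, HasDerivAt F₀ (F₀' t) t)
    (hnF0 : IsLUB ((fun t => ‖F₀ t‖) '' Set.Icc 0 T) nF0)
    (hsF0' : IsLUB ((fun t => ‖F₀' t‖) '' Set.Icc 0 T) sF0')
    (hu₀ : u₀ ≠ 0)
    -- u solves the quadratic ODE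
    (hu0 : u 0 = u₀)
    (hode : ∀ t ∈ Set.Icc (0 : ℝ) T,
      HasDerivAt u (F₀ t + mApp F1 (u t) + mApp F2 (kron (u t) (u t))) t)
    (ε : ℝ) (hε : 0 < ε) :
    ∃ M : ℕ, 1 ≤ M ∧
      ∀ uE : ℕ → EuclideanSpace ℝ (Fin n),
        uE 0 = u₀ →
        (∀ k : ℕ, uE (k + 1) = uE k + (T / M) •
          (F₀ (k * (T / M)) + mApp F1 (uE k) + mApp F2 (kron (uE k) (uE k)))) →
        Real.sqrt (∑ k ∈ Finset.range (M + 1), ‖u (k * (T / M))‖ ^ 2) ≠ 0 ∧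
        Real.sqrt (∑ k ∈ Finset.range (M + 1), ‖uE k‖ ^ 2) ≠ 0 ∧
        Real.sqrt (∑ k ∈ Finset.range (M + 1),
          ‖(Real.sqrt (∑ j ∈ Finset.range (M + 1), ‖u (j * (T / M))‖ ^ 2))⁻¹ • u (k * (T / M)) -
            (Real.sqrt (∑ j ∈ Finset.range (M + 1), ‖uE j‖ ^ 2))⁻¹ • uE k‖ ^ 2) ≤ ε := by
  obtain ⟨A, hA, hAerr⟩ := exists_euler_error_le_div F₀ F1 F2 hT hF₀deriv
    (fun t ht => hnF0.1 ⟨t, ht, rfl⟩) (fun t ht => hsF0'.1 ⟨t, ht, rfl⟩) hode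
  have hA_tendsto : Tendsto (fun M : ℕ => A / M) atTop (𝓝 0) :=
    tendsto_const_div_atTop_nhds_zero_nat A
  have hnormalized :
      Tendsto (fun M : ℕ => 2 * (√((M : ℝ) + 1) * (A / M)) / ‖u₀‖) atTop (𝓝 0) := by
    simpa using (tendsto_sqrt_add_one_div_atTop.const_mul (2 * A / ‖u₀‖)).congr fun M => by ring
  obtain ⟨M, hM, hAM, hMε⟩ := ((eventually_ge_atTop 1).and
    ((hA_tendsto.eventually (ge_mem_nhds one_pos)).and
      (hnormalized.eventually (ge_mem_nhds hε)))).exists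
  refine ⟨M, hM, fun uE huE0 huE => ?_⟩
  have herr := hAerr M hM hAM uE (huE0.trans hu0.symm) huE
  obtain ⟨hX, hY, hdist⟩ :=
    sqrt_sum_normalized_sub_le hu₀ (by simpa using hu0) huE0 (by positivity) herr
  exact ⟨hX, hY, hdist.trans hMε⟩

/-- **Theorem (classical forward Euler for the quadratic ODE).**
Let `u` solve `u' = F₀(t) + F₁u + F₂(u⊗u)` on `[0,T]`, `u(0) = u₀`, under the
assumptions: `⟨x,F₁x⟩ ≤ λ₁‖x‖²` with `λ₁ < 0`; `F₀` is continuously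
differentiable with `sup_{[0,T]}‖F₀'‖ < ∞`; `u₀ ≠ 0`; `‖u₀‖ < 1`;
`R₂ = (‖u₀‖‖F₂‖ + ‖F₀‖/‖u₀‖)/|λ₁| < 1`; `‖F₂‖ + ‖F₀‖ < |λ₁|` (rescaled system).
Then for every `ε > 0` there is an `M ≥ 1` with step size `h = T/M` such that the
forward-Euler iterates `uE^{k+1} = uE^k + h(F₀(kh) + F₁uE^k + F₂(uE^k ⊗ uE^k))`,
`uE⁰ = u₀`, have stacked vectors `u_c = (u(0),…,u(Mh))`, `ũ = (uE⁰,…,uE^M)` that are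
nonzero and satisfy `‖u_c/‖u_c‖ − ũ/‖ũ‖‖ ≤ ε`. -/
theorem classical_euler_normalized_solution (n : ℕ) (hn : 1 ≤ n) (T : ℝ) (hT : 0 < T)
    (F₀ : ℝ → EuclideanSpace ℝ (Fin n)) (F₀' : ℝ → EuclideanSpace ℝ (Fin n))
    (F1 : Matrix (Fin n) (Fin n) ℝ) (F2 : Matrix (Fin n) (Fin n × Fin n) ℝ)
    (u₀ : EuclideanSpace ℝ (Fin n)) (u : ℝ → EuclideanSpace ℝ (Fin n))
    (lam₁ nF0 sF0' : ℝ)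
    -- assumptions on the data
    (hlam : lam₁ < 0)
    (hquad : ∀ x : EuclideanSpace ℝ (Fin n), (inner ℝ x (mApp F1 x) : ℝ) ≤ lam₁ * ‖x‖ ^ 2)
    (hF₀deriv : ∀ t : ℝ, HasDerivAt F₀ (F₀' t) t) (hF₀'cont : Continuous F₀')
    (hnF0 : IsLUB ((fun t => ‖F₀ t‖) '' Set.Icc 0 T) nF0)
    (hsF0' : IsLUB ((fun t => ‖F₀' t‖) '' Set.Icc 0 T) sF0')
    (hu₀ : u₀ ≠ 0) (hu₀small : ‖u₀‖ < 1)
    (hR2 : (‖u₀‖ * specNorm F2 + nF0 / ‖u₀‖) / |lam₁| < 1)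
    (hresc : specNorm F2 + nF0 < |lam₁|)
    -- u solves the quadratic ODE
    (hu0 : u 0 = u₀)
    (hode : ∀ t ∈ Set.Icc (0 : ℝ) T,
      HasDerivAt u (F₀ t + mApp F1 (u t) + mApp F2 (kron (u t) (u t))) t)
    (ε : ℝ) (hε : 0 < ε) :
    ∃ M : ℕ, 1 ≤ M ∧
      ∀ uE : ℕ → EuclideanSpace ℝ (Fin n),
        uE 0 = u₀ →
        (∀ k : ℕ, uE (k + 1) = uE k + (T / M) •
          (F₀ (k * (T / M)) + mApp F1 (uE k) + mApp F2 (kron (uE k) (uE k)))) →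
        Real.sqrt (∑ k ∈ Finset.range (M + 1), ‖u (k * (T / M))‖ ^ 2) ≠ 0 ∧
        Real.sqrt (∑ k ∈ Finset.range (M + 1), ‖uE k‖ ^ 2) ≠ 0 ∧
        Real.sqrt (∑ k ∈ Finset.range (M + 1),
          ‖(Real.sqrt (∑ j ∈ Finset.range (M + 1), ‖u (j * (T / M))‖ ^ 2))⁻¹ • u (k * (T / M)) -
            (Real.sqrt (∑ j ∈ Finset.range (M + 1), ‖uE j‖ ^ 2))⁻¹ • uE k‖ ^ 2) ≤ ε :=
  classical_euler_normalized_solution_general n T hT F₀ F₀' F1 F2 u₀ u nF0 sF0' hF₀deriv hnF0 hsF0'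
    hu₀ hu0 hode ε hε
end
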